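/- In the splitting gadget NFA with m agents, Player 1 has a winning strategy that gathers all agents in the target state f within 2·⌊log₂ m⌋ + 2 steps. -/
import Mathlib


/-- States of the splitting gadget. -/
inductive SQ : Type
  | q0 | q1 | q2 | tgt
deriving DecidableEq

/-- Alphabet of the splitting gadget: a, b and δ. -/
inductive SA : Type
  | a | b | d
deriving DecidableEq

/-- Transitions of the splitting gadget: δ splits q0 to q1 or q2 and loops on q1, q2;
a,b loop on q0; a sends q1 to the target and q2 back to q0; b symmetrically;
every letter loops on the target. -/
def splitD : SQ → SA → SQ → Prop
  | .q0, .d, .q1 => True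
  | .q0, .d, .q2 => True
  | .q0, .a, .q0 => True
  | .q0, .b, .q0 => True
  | .q1, .d, .q1 => True
  | .q1, .a, .tgt => True
  | .q1, .b, .q0 => True
  | .q2, .d, .q2 => True
  | .q2, .b, .tgt => True
  | .q2, .a, .q0 => True
  | .tgt, _, .tgt => True
  | _, _, _ => False

/-- Player 1's positional strategy. -/
def strat {m : ℕ} (c : Fin m → SQ) : SA :=
  if ∀ j, c j = SQ.q0 ∨ c j = SQ.tgt then SA.d
  else if (Finset.univ.filter (fun j => c j = SQ.q2)).card >
      (Finset.univ.filter (fun j => c j = SQ.q1)).card then SA.b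
  else SA.a

/-- In the splitting gadget with m agents, Player 1 has a strategy gathering all
agents in the target within 2⌊log₂ m⌋ + 2 steps. -/
theorem stmt13 (m : ℕ) (hm : 0 < m) :
    ∃ σ : List ((Fin m → SQ) × SA) → (Fin m → SQ) → SA,
      ∀ (ρ : ℕ → (Fin m → SQ)) (acts : ℕ → SA),
        ρ 0 = (fun _ => SQ.q0) →
        (∀ n, acts n = σ (List.ofFn (fun i : Fin n => (ρ i.1, acts i.1))) (ρ n)) →
        (∀ n j, splitD (ρ n j) (acts n) (ρ (n + 1) j)) →
        ∃ n, n ≤ 2 * Nat.log 2 m + 2 ∧ ∀ j, ρ n j = SQ.tgt := by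
  refine ⟨fun _ c => strat c, ?_⟩
  intro ρ acts h0 hacts htrans
  have hA : ∀ n, acts n = strat (ρ n) := fun n => hacts n
  have key : ∀ k, (∀ j, ρ (2*k) j = SQ.q0 ∨ ρ (2*k) j = SQ.tgt) ∧
      (Finset.univ.filter (fun j => ρ (2*k) j ≠ SQ.tgt)).card * 2^k ≤ m := by
    intro k
    induction k with
    | zero =>
      constructor
      · intro j; left; rw [h0]
      · simpa using (Finset.card_filter_le _ _).trans (by simp)
    | succ k ih =>
      obtain ⟨hall, hcount⟩ := ih
      set n := 2*k with hn
      have h2 : 2 * (k+1) = n + 1 + 1 := by omega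
      -- step 1: play d
      have hd : acts n = SA.d := by
        rw [hA, strat, if_pos hall]
      have mid : ∀ j, (ρ n j = SQ.tgt → ρ (n+1) j = SQ.tgt) ∧
          (ρ n j ≠ SQ.tgt → (ρ (n+1) j = SQ.q1 ∨ ρ (n+1) j = SQ.q2)) := by
        intro j
        have ht := htrans n j
        rw [hd] at ht
        rcases hall j with h | h <;> rw [h] at ht <;>
          cases hx : ρ (n+1) j <;> rw [hx] at ht <;> simp [splitD, h] at ht ⊢
      have htgt_iff : ∀ j, ρ (n+1) j = SQ.tgt ↔ ρ n j = SQ.tgt := by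
        intro j
        constructor
        · intro h
          by_contra hne
          rcases (mid j).2 hne with h1 | h1 <;> rw [h1] at h <;> exact SQ.noConfusion h
        · exact (mid j).1
      have hcard1 : (Finset.univ.filter (fun j => ρ (n+1) j ≠ SQ.tgt)).card
          = (Finset.univ.filter (fun j => ρ n j ≠ SQ.tgt)).card := by
        congr 1
        apply Finset.filter_congr
        intro j _
        simp [htgt_iff j]
      set A := Finset.univ.filter (fun j => ρ (n+1) j = SQ.q1) with hAdef
      set B := Finset.univ.filter (fun j => ρ (n+1) j = SQ.q2) with hBdef
      have hsum : A.card + B.card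
          = (Finset.univ.filter (fun j => ρ (n+1) j ≠ SQ.tgt)).card := by
        rw [← Finset.card_union_of_disjoint]
        · congr 1
          ext j
          simp only [hAdef, hBdef, Finset.mem_union, Finset.mem_filter,
            Finset.mem_univ, true_and]
          constructor
          · rintro (h | h) <;> rw [h] <;> simp
          · intro h; exact (mid j).2 (fun ht => h ((htgt_iff j).2 ht))
        · rw [Finset.disjoint_left]
          intro j hj1 hj2
          simp only [hAdef, hBdef, Finset.mem_filter] at hj1 hj2
          rw [hj1.2] at hj2
          exact SQ.noConfusion hj2.2
      -- step 2: cases on strategy at n+1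
      by_cases hallt : ∀ j, ρ (n+1) j = SQ.q0 ∨ ρ (n+1) j = SQ.tgt
      · -- then every agent is tgt at n+1
        have htall : ∀ j, ρ (n+1) j = SQ.tgt := by
          intro j
          rcases hallt j with h | h
          · exfalso
            have := (mid j).2 (fun ht => SQ.noConfusion (h.symm.trans ((mid j).1 ht)))
            rcases this with h1 | h1 <;> rw [h] at h1 <;> exact SQ.noConfusion h1
          · exact h
        have h3 : ∀ j, ρ (n+1+1) j = SQ.tgt := by
          intro j
          have ht := htrans (n+1) j
          rw [htall j] at ht
          cases hx : ρ (n+1+1) j <;> rw [hx] at ht <;> simp [splitD] at ht ⊢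
        rw [h2]
        refine ⟨fun j => Or.inr (h3 j), ?_⟩
        have : (Finset.univ.filter (fun j => ρ (n+1+1) j ≠ SQ.tgt)) = ∅ := by
          apply Finset.filter_eq_empty_iff.2
          intro j _
          simp [h3 j]
        rw [this]
        simp
      · have hact1 : acts (n+1) = if B.card > A.card then SA.b else SA.a := by
          rw [hA, strat, if_neg hallt]
        by_cases hgt : B.card > A.card
        · -- play b : q1 → q0, q2 → tgt
          rw [if_pos hgt] at hact1
          have step : ∀ j, (ρ (n+1+1) j = SQ.q0 ∨ ρ (n+1+1) j = SQ.tgt) ∧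
              (ρ (n+1+1) j ≠ SQ.tgt ↔ ρ (n+1) j = SQ.q1) := by
            intro j
            have ht := htrans (n+1) j
            rw [hact1] at ht
            have hj3 : ρ (n+1) j = SQ.q1 ∨ ρ (n+1) j = SQ.q2 ∨ ρ (n+1) j = SQ.tgt := by
              by_cases h : ρ n j = SQ.tgt
              · exact Or.inr (Or.inr ((mid j).1 h))
              · rcases (mid j).2 h with h1 | h1
                · exact Or.inl h1
                · exact Or.inr (Or.inl h1)
            rcases hj3 with h | h | h <;> rw [h] at ht ⊢ <;>
              cases hx : ρ (n+1+1) j <;> rw [hx] at ht <;> simp [splitD] at ht ⊢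
          rw [h2]
          refine ⟨fun j => (step j).1, ?_⟩
          have hcA : (Finset.univ.filter (fun j => ρ (n+1+1) j ≠ SQ.tgt)).card = A.card := by
            congr 1
            apply Finset.filter_congr
            intro j _
            simp [(step j).2]
          rw [hcA]
          have h2le : A.card * 2 ≤ (Finset.univ.filter (fun j => ρ n j ≠ SQ.tgt)).card := by
            rw [← hcard1, ← hsum]; omega
          calc A.card * 2 ^ (k+1) = A.card * 2 * 2 ^ k := by ring
            _ ≤ (Finset.univ.filter (fun j => ρ n j ≠ SQ.tgt)).card * 2 ^ k :=
                Nat.mul_le_mul_right _ h2le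
            _ ≤ m := hcount
        · -- play a : q1 → tgt, q2 → q0
          rw [if_neg hgt] at hact1
          have step : ∀ j, (ρ (n+1+1) j = SQ.q0 ∨ ρ (n+1+1) j = SQ.tgt) ∧
              (ρ (n+1+1) j ≠ SQ.tgt ↔ ρ (n+1) j = SQ.q2) := by
            intro j
            have ht := htrans (n+1) j
            rw [hact1] at ht
            have hj3 : ρ (n+1) j = SQ.q1 ∨ ρ (n+1) j = SQ.q2 ∨ ρ (n+1) j = SQ.tgt := by
              by_cases h : ρ n j = SQ.tgt
              · exact Or.inr (Or.inr ((mid j).1 h))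
              · rcases (mid j).2 h with h1 | h1
                · exact Or.inl h1
                · exact Or.inr (Or.inl h1)
            rcases hj3 with h | h | h <;> rw [h] at ht ⊢ <;>
              cases hx : ρ (n+1+1) j <;> rw [hx] at ht <;> simp [splitD] at ht ⊢
          rw [h2]
          refine ⟨fun j => (step j).1, ?_⟩
          have hcB : (Finset.univ.filter (fun j => ρ (n+1+1) j ≠ SQ.tgt)).card = B.card := by
            congr 1
            apply Finset.filter_congr
            intro j _
            simp [(step j).2]
          rw [hcB]
          have h2le : B.card * 2 ≤ (Finset.univ.filter (fun j => ρ n j ≠ SQ.tgt)).card := by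
            rw [← hcard1, ← hsum]; omega
          calc B.card * 2 ^ (k+1) = B.card * 2 * 2 ^ k := by ring
            _ ≤ (Finset.univ.filter (fun j => ρ n j ≠ SQ.tgt)).card * 2 ^ k :=
                Nat.mul_le_mul_right _ h2le
            _ ≤ m := hcount
  -- conclude
  obtain ⟨_, hc⟩ := key (Nat.log 2 m + 1)
  refine ⟨2 * (Nat.log 2 m + 1), by omega, ?_⟩
  have hz : (Finset.univ.filter
      (fun j => ρ (2*(Nat.log 2 m + 1)) j ≠ SQ.tgt)).card = 0 := by
    by_contra hne
    have h1 : 1 ≤ (Finset.univ.filter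
        (fun j => ρ (2*(Nat.log 2 m + 1)) j ≠ SQ.tgt)).card := Nat.one_le_iff_ne_zero.2 hne
    have := Nat.lt_pow_succ_log_self (by norm_num : 1 < 2) m
    have : 2 ^ (Nat.log 2 m + 1) ≤ m := le_trans (by simpa using Nat.mul_le_mul_right (2^(Nat.log 2 m + 1)) h1) hc
    omega
  intro j
  by_contra hne
  have : j ∈ Finset.univ.filter (fun j => ρ (2*(Nat.log 2 m + 1)) j ≠ SQ.tgt) := by
    simp [hne]
  rw [Finset.card_eq_zero.1 hz] at this
  exact absurd this (Finset.notMem_empty j)
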